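/- Direct qualitative attribution influence (attack case): if argument B directly attacks topic argument A in an acyclic QBAF under DF-QuAD semantics, then the argument attribution explanation ∇|_{B→A} = lim_{ε→0} (σ_ε(A) − σ(A))/ε, obtained by perturbing τ(B) to τ(B)+ε, is less than or equal to 0. -/

import Mathlib

open scoped BigOperators
attribute [local instance] Classical.propDecidable

/-- The DF-QuAD combination function: given base score `t`, aggregated attacker
strength `va` and aggregated supporter strength `vs`, return the strength. -/
noncomputable def dfquad (t va vs : ℝ) : ℝ :=
  if vs ≤ va then t - t * (va - vs) else t + (1 - t) * (vs - va)

/-- A (finite, acyclic) quantitative bipolar argumentation framework. -/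
structure QBAF (V : Type) [Fintype V] where
  att : V → V → Prop
  sup : V → V → Prop
  disjoint : ∀ x y, ¬ (att x y ∧ sup x y)
  acyclic : WellFounded (fun x y => att x y ∨ sup x y)

namespace QBAF

variable {V : Type} [Fintype V]

/-- Aggregated attacker strength `v_Aa = 1 - ∏ (1 - σ X)` over attackers `X` of `A`. -/
noncomputable def vatt (Q : QBAF V) (σ : V → ℝ) (A : V) : ℝ :=
  1 - ∏ x ∈ Finset.univ.filter (fun x => Q.att x A), (1 - σ x)

/-- Aggregated supporter strength `v_As = 1 - ∏ (1 - σ X)` over supporters `X` of `A`. -/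
noncomputable def vsup (Q : QBAF V) (σ : V → ℝ) (A : V) : ℝ :=
  1 - ∏ x ∈ Finset.univ.filter (fun x => Q.sup x A), (1 - σ x)

/-- `σ` is the DF-QuAD strength function for base scores `τ`. -/
def IsStrength (Q : QBAF V) (τ σ : V → ℝ) : Prop :=
  ∀ A, σ A = dfquad (τ A) (Q.vatt σ A) (Q.vsup σ A)

/-- The edge relation of the QBAF graph. -/
def edge (Q : QBAF V) (x y : V) : Prop := Q.att x y ∨ Q.sup x y

/-- `l` is a (directed) path from `B` to `A` in the QBAF graph. -/
def IsPathFrom (Q : QBAF V) (B A : V) (l : List V) : Prop :=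
  2 ≤ l.length ∧ l.Chain' Q.edge ∧ l.head? = some B ∧ l.getLast? = some A

end QBAF

/-- The argument attribution explanation (AAE) `∇|_{B ↦ A}`: the derivative of the
strength of `A` with respect to the base score of `B`, where `σf τ'` denotes the
DF-QuAD strength function for base scores `τ'`. -/
noncomputable def AAE {V : Type} [Fintype V] (Q : QBAF V)
    (σf : (V → ℝ) → V → ℝ) (τ : V → ℝ) (B A : V) : ℝ :=
  deriv (fun δ => σf (Function.update τ B δ) A) (τ B)

/-!
Perturbing `τ B` changes only the strengths of arguments reachable from `B`. As the edge `B → A`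
is the only path from `B` to `A`, the perturbation reaches `A` only through the factor `1 - σ B`
of its attack aggregate. Now `σ B` is monotone in `τ B`, the attack aggregate of `A` is monotone
in `σ B`, and the DF-QuAD strength is antitone in the attack aggregate; so `σ A` is antitone in
`τ B`, and an antitone function has nonpositive derivative.
-/

open Relation Set

lemma dfquad_mem_Icc {t va vs : ℝ} (ht : t ∈ Icc (0 : ℝ) 1) (hva : va ∈ Icc (0 : ℝ) 1)
    (hvs : vs ∈ Icc (0 : ℝ) 1) : dfquad t va vs ∈ Icc (0 : ℝ) 1 := by
  obtain ⟨ht0, ht1⟩ := ht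
  obtain ⟨hva0, hva1⟩ := hva
  obtain ⟨hvs0, hvs1⟩ := hvs
  unfold dfquad
  split <;> constructor <;> nlinarith

lemma monotone_dfquad_base {va vs : ℝ} (hva : va ∈ Icc (0 : ℝ) 1)
    (hvs : vs ∈ Icc (0 : ℝ) 1) : Monotone (dfquad · va vs) := by
  obtain ⟨hva0, hva1⟩ := hva
  obtain ⟨hvs0, hvs1⟩ := hvs
  intro a b hab
  simp only [dfquad]
  split <;> nlinarith

lemma antitone_dfquad_att {t vs : ℝ} (ht : t ∈ Icc (0 : ℝ) 1) :
    Antitone (dfquad t · vs) := by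
  obtain ⟨ht0, ht1⟩ := ht
  intro a b hab
  simp only [dfquad]
  split_ifs <;> nlinarith

lemma one_sub_prod_one_sub_mem_Icc {ι : Type*} (s : Finset ι) {f : ι → ℝ}
    (hf : ∀ i ∈ s, f i ∈ Icc (0 : ℝ) 1) :
    1 - ∏ i ∈ s, (1 - f i) ∈ Icc (0 : ℝ) 1 := by
  have h0 : 0 ≤ ∏ i ∈ s, (1 - f i) := Finset.prod_nonneg fun i hi => by linarith [(hf i hi).2]
  have h1 : ∏ i ∈ s, (1 - f i) ≤ 1 :=
    Finset.prod_le_one (fun i hi => by linarith [(hf i hi).2])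
      fun i hi => by linarith [(hf i hi).1]
  constructor <;> linarith

namespace QBAF

variable {V : Type} [Fintype V] {Q : QBAF V}

lemma vatt_mem_Icc {σ : V → ℝ} {A : V} (hσ : ∀ x, Q.att x A → σ x ∈ Icc (0 : ℝ) 1) :
    Q.vatt σ A ∈ Icc (0 : ℝ) 1 :=
  one_sub_prod_one_sub_mem_Icc _ fun x hx => hσ x (Finset.mem_filter.1 hx).2

lemma vsup_mem_Icc {σ : V → ℝ} {A : V} (hσ : ∀ x, Q.sup x A → σ x ∈ Icc (0 : ℝ) 1) :
    Q.vsup σ A ∈ Icc (0 : ℝ) 1 :=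
  one_sub_prod_one_sub_mem_Icc _ fun x hx => hσ x (Finset.mem_filter.1 hx).2

lemma vatt_congr {σ σ' : V → ℝ} {A : V} (h : ∀ x, Q.att x A → σ x = σ' x) :
    Q.vatt σ A = Q.vatt σ' A := by
  unfold vatt
  rw [Finset.prod_congr rfl fun x hx => by rw [h x (Finset.mem_filter.1 hx).2]]

lemma vsup_congr {σ σ' : V → ℝ} {A : V} (h : ∀ x, Q.sup x A → σ x = σ' x) :
    Q.vsup σ A = Q.vsup σ' A := by
  unfold vsup
  rw [Finset.prod_congr rfl fun x hx => by rw [h x (Finset.mem_filter.1 hx).2]]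

lemma vatt_eq_of_att (σ : V → ℝ) {A B : V} (h : Q.att B A) :
    Q.vatt σ A =
      1 - (1 - σ B) * ∏ x ∈ (Finset.univ.filter (Q.att · A)).erase B, (1 - σ x) := by
  unfold vatt
  rw [← Finset.mul_prod_erase _ _ (Finset.mem_filter.2 ⟨Finset.mem_univ B, h⟩)]

lemma not_reflTransGen_of_edge {x y : V} (h : Q.edge y x) : ¬ ReflTransGen Q.edge x y :=
  fun hxy => Q.acyclic.transGen.irrefl.irrefl x (TransGen.tail' hxy h)

lemma eq_of_edge_of_reflTransGen {A B y : V} (huniq : ∀ l, Q.IsPathFrom B A l → l = [B, A])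
    (he : Q.edge y A) (hy : ReflTransGen Q.edge B y) : y = B := by
  obtain ⟨l, hchain, hlast⟩ := List.exists_isChain_cons_of_relationReflTransGen hy
  have hpath : Q.IsPathFrom B A ((B :: l) ++ [A]) := by
    refine ⟨by simp, hchain.append (.singleton A) ?_, rfl, List.getLast?_concat⟩
    intro x hx z hz
    rw [List.getLast?_eq_getLast (List.cons_ne_nil _ _), hlast, Option.mem_some_iff] at hx
    cases hx
    cases Option.mem_some_iff.1 hz
    exact he
  obtain rfl : l = [] := by simpa using huniq _ hpath
  exact hlast.symm

namespace IsStrength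

variable {τ σ : V → ℝ}

lemma mem_Icc (hσ : Q.IsStrength τ σ) (hτ : ∀ x, τ x ∈ Icc (0 : ℝ) 1) (x : V) :
    σ x ∈ Icc (0 : ℝ) 1 := by
  induction x using Q.acyclic.induction with
  | _ x ih =>
    rw [hσ x]
    exact dfquad_mem_Icc (hτ x) (vatt_mem_Icc fun y hy => ih y (.inl hy))
      (vsup_mem_Icc fun y hy => ih y (.inr hy))

lemma apply_eq_of_eqOn_ancestors {τ' σ' : V → ℝ} (hσ : Q.IsStrength τ σ)
    (hσ' : Q.IsStrength τ' σ') {x : V} (h : ∀ y, ReflTransGen Q.edge y x → τ y = τ' y) :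
    σ x = σ' x := by
  induction x using Q.acyclic.induction with
  | _ x ih =>
    have hparent : ∀ y, Q.edge y x → σ y = σ' y := fun y hy =>
      ih y hy fun z hz => h z (hz.tail hy)
    rw [hσ x, hσ' x, h x .refl, vatt_congr fun y hy => hparent y (.inl hy),
      vsup_congr fun y hy => hparent y (.inr hy)]

variable {σ' : V → ℝ} {B : V} {δ : ℝ}

lemma apply_update_of_not_reflTransGen (hσ : Q.IsStrength τ σ)
    (hσ' : Q.IsStrength (Function.update τ B δ) σ') {x : V} (hx : ¬ ReflTransGen Q.edge B x) :
    σ' x = σ x :=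
  (hσ.apply_eq_of_eqOn_ancestors hσ' fun y hy =>
    (Function.update_of_ne (fun hyB : y = B => hx (hyB ▸ hy)) δ τ).symm).symm

lemma apply_update_self (hσ : Q.IsStrength τ σ)
    (hσ' : Q.IsStrength (Function.update τ B δ) σ') :
    σ' B = dfquad δ (Q.vatt σ B) (Q.vsup σ B) := by
  have hparent : ∀ y, Q.edge y B → σ' y = σ y := fun y hy =>
    hσ.apply_update_of_not_reflTransGen hσ' (not_reflTransGen_of_edge hy)
  rw [hσ' B, Function.update_self, vatt_congr fun y hy => hparent y (.inl hy),
    vsup_congr fun y hy => hparent y (.inr hy)]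

lemma apply_update_of_att (hσ : Q.IsStrength τ σ)
    (hσ' : Q.IsStrength (Function.update τ B δ) σ') {A : V} (hatt : Q.att B A)
    (huniq : ∀ l, Q.IsPathFrom B A l → l = [B, A]) :
    σ' A = dfquad (τ A)
      (1 - (1 - dfquad δ (Q.vatt σ B) (Q.vsup σ B)) *
        ∏ x ∈ (Finset.univ.filter (Q.att · A)).erase B, (1 - σ x))
      (Q.vsup σ A) := by
  have hAB : A ≠ B := by
    rintro rfl
    exact Q.acyclic.irrefl.irrefl A (.inl hatt)
  have hparent : ∀ y, Q.edge y A → y ≠ B → σ' y = σ y := fun y hy hyB =>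
    hσ.apply_update_of_not_reflTransGen hσ' fun hBy =>
      hyB (eq_of_edge_of_reflTransGen huniq hy hBy)
  have hrest : ∏ x ∈ (Finset.univ.filter (Q.att · A)).erase B, (1 - σ' x)
      = ∏ x ∈ (Finset.univ.filter (Q.att · A)).erase B, (1 - σ x) :=
    Finset.prod_congr rfl fun y hy => by
      rw [hparent y (.inl (Finset.mem_filter.1 (Finset.mem_of_mem_erase hy)).2)
        (Finset.ne_of_mem_erase hy)]
  rw [hσ' A, Function.update_of_ne hAB, vatt_eq_of_att σ' hatt, hσ.apply_update_self hσ', hrest,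
    vsup_congr fun y hy => hparent y (.inr hy) fun hyB => Q.disjoint B A ⟨hatt, hyB ▸ hy⟩]

end IsStrength

end QBAF

/-- direct qualitative attribution influence, attack case.
If `B` directly attacks the topic argument `A` (the edge `(B,A) ∈ ℛ⁻` being the
unique path from `B` to `A`), then `∇|_{B ↦ A} ≤ 0`. -/
theorem direct_qualitative_attack {V : Type} [Fintype V] (Q : QBAF V)
    (σf : (V → ℝ) → V → ℝ) (hσ : ∀ τ, Q.IsStrength τ (σf τ))
    (τ : V → ℝ) (hτ : ∀ x, τ x ∈ Set.Icc (0:ℝ) 1)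
    (A B : V) (hatt : Q.att B A)
    (huniq : ∀ l, Q.IsPathFrom B A l → l = [B, A]) :
    AAE Q σf τ B A ≤ 0 := by
  have hmem := (hσ τ).mem_Icc hτ
  have hrest : 0 ≤ ∏ x ∈ (Finset.univ.filter (Q.att · A)).erase B, (1 - σf τ x) :=
    Finset.prod_nonneg fun x _ => sub_nonneg.2 (hmem x).2
  have hB : Monotone fun δ => dfquad δ (Q.vatt (σf τ) B) (Q.vsup (σf τ) B) :=
    monotone_dfquad_base (QBAF.vatt_mem_Icc fun x _ => hmem x)
      (QBAF.vsup_mem_Icc fun x _ => hmem x)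
  have hA : Antitone fun δ => σf (Function.update τ B δ) A := by
    intro a b hab
    dsimp only
    rw [(hσ τ).apply_update_of_att (hσ _) hatt huniq,
      (hσ τ).apply_update_of_att (hσ _) hatt huniq]
    exact antitone_dfquad_att (hτ A)
      (sub_le_sub_left (mul_le_mul_of_nonneg_right (sub_le_sub_left (hB hab) 1) hrest) 1)
  exact hA.deriv_nonpos
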